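/- arXiv:math/0609634 — 3 statements merged into one kernel-verified Lean document; each statement's English description precedes it below -/
import Mathlib

section
/- Every combinatorial k-parameter (S, Λ) is ℵ_{k+1}-free: for every subset Λ' ⊆ Λ of cardinality less than ℵ_{k+1} there is an enumeration ⟨η̄^α : α < α*⟩ of Λ' without repetitions such that for every α < α* there exist m ≤ k and n ∈ ℕ with η̄^α↾⟨m,n⟩ ∉ {η̄^β↾⟨m,n⟩ : β < α}. -/
/-!
Order a set `T` of tuples of size `≤ ℵ_j` so that every `η ∈ T` has a direction `m` and a
length `n` for which `η↾⟨m,n⟩` differs from `β↾⟨m,n⟩` for all earlier `β`, by induction on `j`,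
allowing for each `η` only directions from a prescribed set of `j + 1` directions.

For `j = 0`, enumerate `T` in type `ω`: each `η` has finitely many predecessors, and a long
enough initial segment of any coordinate separates `η` from all of them.

For `#T ≤ ℵ_{j+1}`, enumerate `T` with all initial segments of size `≤ ℵ_j`, and give each
coordinate function the first stage at which it occurs and each tuple the latest stage of its
coordinates. The layers of equal stage have size `≤ ℵ_j`. If `η` agreed outside two different
directions with tuples of earlier layers, all coordinates of `η` would occur before its own
layer; so only one direction of `η` is blocked by earlier layers. Removing it and ordering every
layer by induction, the layers placed one after the other give the required order.
-/

open Cardinal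

namespace Sh883

/-- A "restricted tuple": the result of replacing the `m`-th coordinate of a `(k+1)`-tuple
of functions `ℕ → S` by a finite sequence (list) of elements of `S`, keeping the other
coordinates. -/
structure Res (k : ℕ) (S : Type u) where
  m : Fin (k + 1)
  seq : List S
  rest : (l : Fin (k + 1)) → l ≠ m → ℕ → S

/-- `η̄↾⟨m,n⟩` : replace the `m`-th coordinate of `η̄` by the finite sequence
`⟨η_m(0), …, η_m(n-1)⟩`. -/
def restrictAt {k : ℕ} {S : Type u} (η : Fin (k + 1) → ℕ → S) (m : Fin (k + 1)) (n : ℕ) :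
    Res k S :=
  ⟨m, List.ofFn fun i : Fin n => η m i, fun l _ => η l⟩

end Sh883

universe u

open Set

namespace Ordinal

theorem mul_add_lt_mul_of_lt {a b b' c : Ordinal.{u}} (hc : c < a) (hb : b < b') :
    a * b + c < a * b' :=
  calc a * b + c < a * b + a := add_lt_add_right hc _
    _ = a * Order.succ b := (mul_succ a b).symm
    _ ≤ a * b' := mul_le_mul_right (Order.succ_le_of_lt hb) a

theorem mul_add_lt_mul_add_iff {a b₁ b₂ c₁ c₂ : Ordinal.{u}} (h₁ : c₁ < a) (h₂ : c₂ < a) :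
    a * b₁ + c₁ < a * b₂ + c₂ ↔ b₁ < b₂ ∨ b₁ = b₂ ∧ c₁ < c₂ := by
  constructor
  · intro h
    rcases lt_trichotomy b₁ b₂ with hb | rfl | hb
    · exact Or.inl hb
    · exact Or.inr ⟨rfl, (add_lt_add_iff_left _).1 h⟩
    · exact absurd h ((mul_add_lt_mul_of_lt h₂ hb).trans_le le_self_add).not_gt
  · rintro (hb | ⟨rfl, hc⟩)
    · exact (mul_add_lt_mul_of_lt h₁ hb).trans_le le_self_add
    · exact add_lt_add_right hc _

theorem mul_add_inj {a b₁ b₂ c₁ c₂ : Ordinal.{u}} (h₁ : c₁ < a) (h₂ : c₂ < a)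
    (h : a * b₁ + c₁ = a * b₂ + c₂) : b₁ = b₂ ∧ c₁ = c₂ := by
  have hdiv : ∀ {b c}, c < a → (a * b + c) / a = b := fun hc => by
    rw [mul_add_div _ hc.ne_bot, div_eq_zero_of_lt hc, add_zero]
  have hmod : ∀ {b c}, c < a → (a * b + c) % a = c := fun hc => by
    rw [mul_add_mod_self, mod_eq_of_lt hc]
  exact ⟨by rw [← hdiv (b := b₁) h₁, h, hdiv h₂], by rw [← hmod (b := b₁) h₁, h, hmod h₂]⟩

theorem exists_enumeration_of_injOn {α : Type u} {T : Set α} {g : α → Ordinal.{u}}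
    (hg : InjOn g T) : ∃ (o : Ordinal.{u}) (e : Iio o → α), Function.Injective e ∧
      range e = T ∧ ∀ a b, a < b → g (e a) < g (e b) := by
  let ι : T ↪ Ordinal.{u} := ⟨fun x => g x, fun x y h => Subtype.ext (hg x.2 y.2 h)⟩
  have := (RelEmbedding.preimage ι (· < ·)).isWellOrder
  refine ⟨type (ι ⁻¹'o (· < ·)), fun a => (enum _ a).1,
    Subtype.val_injective.comp (enum _).injective, ?_, fun a b h => (enum _).map_rel_iff.2 h⟩
  ext x
  refine ⟨?_, fun hx => ?_⟩
  · rintro ⟨a, rfl⟩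
    exact (enum _ a).2
  obtain ⟨a, ha⟩ := (enum (ι ⁻¹'o (· < ·))).surjective ⟨x, hx⟩
  exact ⟨a, congrArg Subtype.val ha⟩

end Ordinal

namespace Cardinal

theorem exists_rank_mk_le_of_le_succ {α : Type u} (T : Set α) {μ : Cardinal.{u}} (hμ : ℵ₀ ≤ μ)
    (hT : #T ≤ Order.succ μ) : ∃ f : α → Ordinal.{u}, ∀ x ∈ T, #{y ∈ T | f y ≤ f x} ≤ μ := by
  classical
  obtain ⟨r, _, hr⟩ := exists_ord_eq T
  set f : α → Ordinal.{u} := fun x => if h : x ∈ T then Ordinal.typein r ⟨x, h⟩ else 0 with hf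
  refine ⟨f, fun x hx => ?_⟩
  have hsub : {y ∈ T | f y ≤ f x} ⊆ insert x (Subtype.val '' {y | r y ⟨x, hx⟩}) := by
    rintro y ⟨hy, hle⟩
    simp only [hf, dif_pos hx, dif_pos hy] at hle
    rcases hle.lt_or_eq with hlt | heq
    · exact Or.inr ⟨⟨y, hy⟩, (Ordinal.typein_lt_typein r).1 hlt, rfl⟩
    · exact Or.inl (congrArg Subtype.val (Ordinal.typein_injective r heq))
  have hpred : #{y | r y ⟨x, hx⟩} ≤ μ :=
    Order.lt_succ_iff.1 ((card_typein_lt _ hr).trans_le hT)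
  calc _ ≤ #(insert x (Subtype.val '' {y | r y ⟨x, hx⟩}) : Set α) := mk_le_mk_of_subset hsub
    _ ≤ #(Subtype.val '' {y | r y ⟨x, hx⟩}) + 1 := mk_insert_le
    _ ≤ μ + 1 := add_le_add_left (mk_image_le.trans hpred) 1
    _ = μ := add_one_of_aleph0_le hμ

end Cardinal

namespace Sh883

open Filter Ordinal

variable {k : ℕ} {S : Type u}

theorem restrictAt_eq_restrictAt_iff {η β : Fin (k + 1) → ℕ → S} {m : Fin (k + 1)} {n : ℕ} :
    restrictAt η m n = restrictAt β m n ↔ (∀ i < n, η m i = β m i) ∧ ∀ l ≠ m, η l = β l := by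
  simp only [restrictAt, Res.mk.injEq, true_and, heq_eq_eq, List.ofFn_inj, funext_iff,
    Fin.forall_iff]

theorem eventually_restrictAt_ne {η β : Fin (k + 1) → ℕ → S} (h : β ≠ η) (m : Fin (k + 1)) :
    ∀ᶠ n in atTop, restrictAt η m n ≠ restrictAt β m n := by
  by_contra! hfreq
  refine h (funext fun l => ?_)
  rcases eq_or_ne l m with rfl | hl
  · funext i
    obtain ⟨n, hin, hn⟩ := frequently_atTop.1 hfreq (i + 1)
    exact ((restrictAt_eq_restrictAt_iff.1 hn).1 i (by omega)).symm
  · obtain ⟨n, -, hn⟩ := frequently_atTop.1 hfreq 0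
    exact ((restrictAt_eq_restrictAt_iff.1 hn).2 l hl).symm

theorem exists_restrictAt_ne_of_finite {T : Set (Fin (k + 1) → ℕ → S)} (hT : T.Finite)
    (η : Fin (k + 1) → ℕ → S) (m : Fin (k + 1)) :
    ∃ n, ∀ β ∈ T, β ≠ η → restrictAt η m n ≠ restrictAt β m n :=
  ((eventually_all_finite hT).2 fun _ _ =>
    eventually_imp_distrib_left.2 fun h => eventually_restrictAt_ne h m).exists

def IsFreeRanking (T : Set (Fin (k + 1) → ℕ → S))
    (A : (Fin (k + 1) → ℕ → S) → Finset (Fin (k + 1)))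
    (g : (Fin (k + 1) → ℕ → S) → Ordinal.{u}) : Prop :=
  InjOn g T ∧ ∀ η ∈ T, ∃ m ∈ A η, ∃ n, ∀ β ∈ T, g β < g η → restrictAt η m n ≠ restrictAt β m n

theorem exists_isFreeRanking_of_countable {T : Set (Fin (k + 1) → ℕ → S)}
    {A : (Fin (k + 1) → ℕ → S) → Finset (Fin (k + 1))} (hT : T.Countable)
    (hA : ∀ η ∈ T, (A η).Nonempty) : ∃ g, IsFreeRanking T A g := by
  obtain ⟨f, hf⟩ := countable_iff_exists_injOn.1 hT
  refine ⟨fun η => f η, fun x hx y hy h => hf hx hy (Nat.cast_inj.1 h), fun η hη => ?_⟩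
  obtain ⟨m, hm⟩ := hA η hη
  have hpred : {β ∈ T | f β < f η}.Finite :=
    ((finite_Iio (f η)).subset (image_subset_iff.2 fun β hβ => hβ.2)).of_finite_image
      (hf.mono fun β hβ => hβ.1)
  obtain ⟨n, hn⟩ := exists_restrictAt_ne_of_finite hpred η m
  refine ⟨m, hm, n, fun β hβ hlt => hn β ⟨hβ, Nat.cast_lt.1 hlt⟩ ?_⟩
  rintro rfl
  exact lt_irrefl _ hlt

theorem isFreeRanking_mul_add {T : Set (Fin (k + 1) → ℕ → S)}
    {A A' : (Fin (k + 1) → ℕ → S) → Finset (Fin (k + 1))} {ρ : (Fin (k + 1) → ℕ → S) → Ordinal.{u}}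
    {G : Ordinal.{u} → (Fin (k + 1) → ℕ → S) → Ordinal.{u}} {a : Ordinal.{u}}
    (hGa : ∀ η ∈ T, G (ρ η) η < a) (hG : ∀ i, IsFreeRanking {η ∈ T | ρ η = i} A' (G i))
    (hA' : ∀ η, A' η ⊆ A η)
    (hlower : ∀ η ∈ T, ∀ m ∈ A' η, ∀ β ∈ T, ρ β < ρ η → ∃ l ≠ m, β l ≠ η l) :
    IsFreeRanking T A fun η => a * ρ η + G (ρ η) η := by
  refine ⟨fun x hx y hy h => ?_, fun η hη => ?_⟩
  · obtain ⟨hρ, hGxy⟩ := mul_add_inj (hGa x hx) (hGa y hy) h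
    exact (hG (ρ x)).1 ⟨hx, rfl⟩ ⟨hy, hρ.symm⟩ (by rwa [← hρ] at hGxy)
  · obtain ⟨m, hm, n, hn⟩ := (hG (ρ η)).2 η ⟨hη, rfl⟩
    refine ⟨m, hA' η hm, n, fun β hβ hlt heq => ?_⟩
    rcases (mul_add_lt_mul_add_iff (hGa β hβ) (hGa η hη)).1 hlt with hρ | ⟨hρ, hGlt⟩
    · obtain ⟨l, hl, hne⟩ := hlower η hη m hm β hβ hρ
      exact hne ((restrictAt_eq_restrictAt_iff.1 heq).2 l hl).symm
    · exact hn β ⟨hβ, hρ⟩ (by rwa [hρ] at hGlt) heq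

theorem mk_setOf_forall_mem_biUnion_range_le {X : Set (Fin (k + 1) → ℕ → S)} {μ : Cardinal.{u}}
    (hμ : ℵ₀ ≤ μ) (hX : #X ≤ μ) :
    #{η : Fin (k + 1) → ℕ → S | ∀ l, η l ∈ ⋃ β ∈ X, range β} ≤ μ := by
  set C := ⋃ β ∈ X, range β
  have hsurj : Function.Surjective fun p : X × Fin (k + 1) => (⟨p.1.1 p.2, by
      exact mem_biUnion p.1.2 (mem_range_self p.2)⟩ : C) := by
    rintro ⟨c, hc⟩
    obtain ⟨β, hβ, l, rfl⟩ := mem_iUnion₂.1 hc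
    exact ⟨(⟨β, hβ⟩, l), rfl⟩
  have hC : #C ≤ μ :=
    calc #C ≤ #(X × Fin (k + 1)) := mk_le_of_surjective hsurj
      _ = #X * (k + 1) := by simp
      _ ≤ μ * μ := mul_le_mul' hX (by exact_mod_cast (natCast_lt_aleph0 (n := k + 1)).le.trans hμ)
      _ = μ := mul_eq_self hμ
  have hinj : Function.Injective fun (η : {η : Fin (k + 1) → ℕ → S | ∀ l, η l ∈ C}) l =>
      (⟨η.1 l, η.2 l⟩ : C) := fun η η' h =>
    Subtype.ext (funext fun l => congrArg Subtype.val (congrFun h l))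
  calc _ ≤ #(Fin (k + 1) → C) := mk_le_of_injective hinj
    _ = #C ^ (k + 1) := by simp [← power_natCast]
    _ ≤ μ ^ (k + 1) := power_le_power_right hC
    _ ≤ μ := by exact_mod_cast power_nat_le hμ

section Stages

variable (T : Set (Fin (k + 1) → ℕ → S)) (f : (Fin (k + 1) → ℕ → S) → Ordinal.{u})

noncomputable def coordStage (c : ℕ → S) : Ordinal.{u} :=
  sInf (f '' {β ∈ T | c ∈ range β})

noncomputable def tupleStage (η : Fin (k + 1) → ℕ → S) : Ordinal.{u} :=
  Finset.univ.sup fun l => coordStage T f (η l)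

variable {T f}

theorem exists_coordStage_eq {η : Fin (k + 1) → ℕ → S} (hη : η ∈ T) (l : Fin (k + 1)) :
    ∃ β ∈ T, η l ∈ range β ∧ f β = coordStage T f (η l) := by
  obtain ⟨β, ⟨hβ, hl⟩, hfβ⟩ := csInf_mem (⟨f η, η, ⟨hη, mem_range_self l⟩, rfl⟩ :
    (f '' {β ∈ T | η l ∈ range β}).Nonempty)
  exact ⟨β, hβ, hl, hfβ⟩

theorem coordStage_le {β : Fin (k + 1) → ℕ → S} {c : ℕ → S} (hβ : β ∈ T) (hc : c ∈ range β) :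
    coordStage T f c ≤ f β :=
  csInf_le' ⟨β, ⟨hβ, hc⟩, rfl⟩

theorem coordStage_le_tupleStage (η : Fin (k + 1) → ℕ → S) (l : Fin (k + 1)) :
    coordStage T f (η l) ≤ tupleStage T f η :=
  Finset.le_sup (f := fun l => coordStage T f (η l)) (Finset.mem_univ l)

theorem tupleStage_le {η : Fin (k + 1) → ℕ → S} (hη : η ∈ T) : tupleStage T f η ≤ f η :=
  Finset.sup_le fun l _ => coordStage_le hη (mem_range_self l)

theorem mk_tupleStage_eq_le {μ : Cardinal.{u}} (hμ : ℵ₀ ≤ μ)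
    (hf : ∀ x ∈ T, #{y ∈ T | f y ≤ f x} ≤ μ) (i : Ordinal.{u}) :
    #{η ∈ T | tupleStage T f η = i} ≤ μ := by
  rcases eq_empty_or_nonempty {η ∈ T | tupleStage T f η = i} with h | ⟨η₀, hη₀, rfl⟩
  · simp [h]
  refine (mk_le_mk_of_subset fun η hη l => ?_).trans
    (mk_setOf_forall_mem_biUnion_range_le hμ (hf η₀ hη₀))
  obtain ⟨β, hβ, hl, hfβ⟩ := exists_coordStage_eq hη.1 l
  refine mem_biUnion ⟨hβ, ?_⟩ hl
  calc f β = coordStage T f (η l) := hfβ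
    _ ≤ tupleStage T f η := coordStage_le_tupleStage η l
    _ = tupleStage T f η₀ := hη.2
    _ ≤ f η₀ := tupleStage_le hη₀

theorem exists_sole_blocked_direction (η : Fin (k + 1) → ℕ → S) :
    ∃ m₀, ∀ m ≠ m₀, ∀ β, tupleStage T f β < tupleStage T f η → ∃ l ≠ m, β l ≠ η l := by
  by_contra! h
  obtain ⟨m, -, β, hβ, hβη⟩ := h 0
  obtain ⟨m', hm', β', hβ', hβ'η⟩ := h m
  have hcoord : ∀ l, coordStage T f (η l) < tupleStage T f η := fun l => by
    rcases eq_or_ne l m with rfl | hl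
    · rw [← hβ'η l hm'.symm]
      exact (coordStage_le_tupleStage β' l).trans_lt hβ'
    · rw [← hβη l hl]
      exact (coordStage_le_tupleStage β l).trans_lt hβ
  exact lt_irrefl _ ((Finset.sup_lt_iff (bot_le.trans_lt hβ)).2 fun l _ => hcoord l)

end Stages

theorem exists_isFreeRanking_of_mk_le_succ {μ : Cardinal.{u}} (hμ : ℵ₀ ≤ μ) {j : ℕ}
    (ih : ∀ (T : Set (Fin (k + 1) → ℕ → S)) (A : (Fin (k + 1) → ℕ → S) → Finset (Fin (k + 1))),
      #T ≤ μ → (∀ η ∈ T, j ≤ (A η).card) → ∃ g, IsFreeRanking T A g)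
    {T : Set (Fin (k + 1) → ℕ → S)} {A : (Fin (k + 1) → ℕ → S) → Finset (Fin (k + 1))}
    (hT : #T ≤ Order.succ μ) (hA : ∀ η ∈ T, j + 1 ≤ (A η).card) : ∃ g, IsFreeRanking T A g := by
  obtain ⟨f, hf⟩ := exists_rank_mk_le_of_le_succ T hμ hT
  choose m₀ hm₀ using exists_sole_blocked_direction (T := T) (f := f)
  have hA' : ∀ η ∈ T, j ≤ ((A η).erase (m₀ η)).card := fun η hη => by
    have := Finset.pred_card_le_card_erase (s := A η) (a := m₀ η)
    have := hA η hη
    omega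
  choose G hG using fun i => ih {η ∈ T | tupleStage T f η = i} (fun η => (A η).erase (m₀ η))
    (mk_tupleStage_eq_le hμ hf i) fun η hη => hA' η hη.1
  obtain ⟨a, ha⟩ := bddAbove_of_small (s := range fun η : T => G (tupleStage T f η) η)
  exact ⟨_, isFreeRanking_mul_add (a := Order.succ a)
    (fun η hη => Order.lt_succ_iff.2 (ha ⟨⟨η, hη⟩, rfl⟩)) hG (fun η => Finset.erase_subset _ _)
    fun η _ m hm β _ => hm₀ η m (Finset.ne_of_mem_erase hm) β⟩

theorem exists_isFreeRanking (j : ℕ) (T : Set (Fin (k + 1) → ℕ → S))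
    (A : (Fin (k + 1) → ℕ → S) → Finset (Fin (k + 1))) (hT : #T ≤ aleph j)
    (hA : ∀ η ∈ T, j + 1 ≤ (A η).card) : ∃ g, IsFreeRanking T A g := by
  induction j generalizing T A with
  | zero =>
    refine exists_isFreeRanking_of_countable ?_ fun η hη => Finset.card_pos.1 (hA η hη)
    rwa [Nat.cast_zero, aleph_zero, le_aleph0_iff_set_countable] at hT
  | succ j ih =>
    refine exists_isFreeRanking_of_mk_le_succ (aleph0_le_aleph j) ih ?_ hA
    rwa [Nat.cast_succ, ← succ_aleph] at hT

end Sh883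

open Sh883 in
theorem stmt7_general {k : ℕ} {S : Type u}
    (Λ' : Set (Fin (k + 1) → ℕ → S))
    (hcard : #Λ' < Cardinal.aleph (k + 1)) :
    ∃ (o : Ordinal.{u}) (e : Set.Iio o → (Fin (k + 1) → ℕ → S)),
      Function.Injective e ∧ Set.range e = Λ' ∧
      ∀ α : Set.Iio o, ∃ (m : Fin (k + 1)) (n : ℕ),
        ∀ β : Set.Iio o, (β : Ordinal) < (α : Ordinal) →
          restrictAt (e α) m n ≠ restrictAt (e β) m n := by
  rw [← succ_aleph, Order.lt_succ_iff] at hcard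
  obtain ⟨g, hinj, hfree⟩ := exists_isFreeRanking k Λ' (fun _ => Finset.univ) hcard (by simp)
  obtain ⟨o, e, he, hrange, hmono⟩ := Ordinal.exists_enumeration_of_injOn hinj
  have hmem : ∀ α, e α ∈ Λ' := fun α => hrange ▸ Set.mem_range_self α
  refine ⟨o, e, he, hrange, fun α => ?_⟩
  obtain ⟨m, -, n, hn⟩ := hfree (e α) (hmem α)
  exact ⟨m, n, fun β hβ => hn (e β) (hmem β) (hmono β α hβ)⟩

open Sh883 in
/-- Every combinatorial `k`-parameter `(S, Λ)` is `ℵ_{k+1}`-free: for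
every subset `Λ' ⊆ Λ` of cardinality less than `ℵ_{k+1}` there is an enumeration
`⟨η̄^α : α < α*⟩` of `Λ'` without repetitions such that for every `α < α*` there are
`m ≤ k` and `n ∈ ℕ` with `η̄^α↾⟨m,n⟩ ∉ {η̄^β↾⟨m,n⟩ : β < α}`. -/
theorem stmt7 {k : ℕ} {S : Type u} (Λ : Set (Fin (k + 1) → ℕ → S))
    (Λ' : Set (Fin (k + 1) → ℕ → S)) (hsub : Λ' ⊆ Λ)
    (hcard : #Λ' < Cardinal.aleph (k + 1)) :
    ∃ (o : Ordinal.{u}) (e : Set.Iio o → (Fin (k + 1) → ℕ → S)),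
      Function.Injective e ∧ Set.range e = Λ' ∧
      ∀ α : Set.Iio o, ∃ (m : Fin (k + 1)) (n : ℕ),
        ∀ β : Set.Iio o, (β : Ordinal) < (α : Ordinal) →
          restrictAt (e α) m n ≠ restrictAt (e β) m n :=
  stmt7_general Λ' hcard
end

section
/- Let k be a natural number and χ an infinite cardinal with χ^{ℵ_0} = χ. For each ℓ ≤ k let S_ℓ be a set of cardinality ℶ_ℓ(χ) (where ℶ_0(χ) = χ and ℶ_{ℓ+1}(χ) = 2^{ℶ_ℓ(χ)}), and let Λ = ∏_{ℓ≤k}(ℕ → S_ℓ) be the set of all (k+1)-tuples ⟨η_0, …, η_k⟩ with η_ℓ : ℕ → S_ℓ. Then there exists a (Λ, χ̄)-black box with χ_m = χ for every m ≤ k. -/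
open Cardinal

namespace Sh883

/-- A "restricted tuple" in the many-sorted setting: the result of replacing the `m`-th
coordinate of a tuple `⟨η_0, …, η_k⟩` (with `η_l : ℕ → S l`) by a finite sequence of
elements of `S m`, keeping the other coordinates. -/
structure ResD (k : ℕ) (S : Fin (k + 1) → Type u) where
  m : Fin (k + 1)
  seq : List (S m)
  rest : (l : Fin (k + 1)) → l ≠ m → ℕ → S l

/-- `η̄↾⟨m,n⟩` : replace the `m`-th coordinate of `η̄` by the finite sequence
`⟨η_m(0), …, η_m(n-1)⟩`. -/
def restrictAtD {k : ℕ} {S : Fin (k + 1) → Type u} (η : (m : Fin (k + 1)) → ℕ → S m)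
    (m : Fin (k + 1)) (n : ℕ) : ResD k S :=
  ⟨m, List.ofFn fun i : Fin n => η m i, fun l _ => η l⟩

/-- `Λ_m = {η̄↾⟨m,n⟩ : η̄ ∈ Λ, n ∈ ℕ}`. -/
def LambdaResAtD {k : ℕ} {S : Fin (k + 1) → Type u}
    (Λ : Set ((m : Fin (k + 1)) → ℕ → S m)) (m : Fin (k + 1)) : Set (ResD k S) :=
  {ν | ∃ η ∈ Λ, ∃ n : ℕ, ν = restrictAtD η m n}

/-- A `(Λ, χ̄)`-black box: a family of ordinals `α_{η̄,m,n} < χ_m` (for `η̄ ∈ Λ`, `m ≤ k`,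
`n ∈ ℕ`) such that for every function `h` on `Λ_0 ∪ … ∪ Λ_k` with `h(ν)` an ordinal
`< χ_m` whenever `ν ∈ Λ_m`, there is `η̄ ∈ Λ` with `h(η̄↾⟨m,n⟩) = α_{η̄,m,n}` for all
`m ≤ k` and `n ∈ ℕ`. -/
def IsBlackBoxD {k : ℕ} {S : Fin (k + 1) → Type u}
    (Λ : Set ((m : Fin (k + 1)) → ℕ → S m)) (χ : Fin (k + 1) → Cardinal.{u})
    (A : ↥Λ → Fin (k + 1) → ℕ → Ordinal.{u}) : Prop :=
  (∀ (η : ↥Λ) (m : Fin (k + 1)) (n : ℕ), A η m n < (χ m).ord) ∧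
    ∀ h : ResD k S → Ordinal.{u},
      (∀ m : Fin (k + 1), ∀ ν ∈ LambdaResAtD Λ m, h ν < (χ m).ord) →
      ∃ η : ↥Λ, ∀ (m : Fin (k + 1)) (n : ℕ),
        h (restrictAtD (η : (m : Fin (k + 1)) → ℕ → S m) m n) = A η m n

/-- Iterated beth function: `iterBeth χ 0 = χ` and `iterBeth χ (l+1) = 2 ^ iterBeth χ l`. -/
def iterBeth (χ : Cardinal.{u}) : ℕ → Cardinal.{u}
  | 0 => χ
  | l + 1 => 2 ^ iterBeth χ l

end Sh883

/-!
A function of the coordinates below `m` with values below `χ` is determined by a function on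
`∏_{l<m} (ℕ → S_l)`, a set of size at most `ℶ_{m-1}(χ)^ℵ₀ = ℶ_{m-1}(χ)`; so there are at most
`χ^{ℶ_{m-1}(χ)} = ℶ_m(χ)` of them (or `χ` if `m = 0`), and each one is coded by a point of `S_m`.
Put `α_{η̄,m,n}` := the value at `η̄` of the function coded by `η_m(n)`. Given `h`, build `η̄`
from the top coordinate down, letting `η_m(n)` code `ρ̄ ↦ h⟨η_m↾n; ρ̄ below m; η̄ above m⟩`;
evaluated at `ρ̄ = η̄` this function is `h(η̄↾⟨m,n⟩)`.
-/

open Cardinal Function Set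

theorem Function.isFixedPt_iterate_of_dependsOn_Ioi {n : ℕ} {β : Fin n → Type*}
    (Φ : (∀ i, β i) → ∀ i, β i) (hΦ : ∀ i, DependsOn (fun x => Φ x i) (Ioi i)) (x : ∀ i, β i) :
    IsFixedPt Φ (Φ^[n] x) := by
  have stable : ∀ j, ∀ i : Fin n, n ≤ i + j → Φ^[j + 1] x i = Φ^[j] x i := by
    intro j
    induction j with
    | zero => intro i hi; omega
    | succ j ih =>
      intro i hi
      calc Φ^[j + 2] x i = Φ (Φ^[j + 1] x) i := by rw [iterate_succ_apply']
        _ = Φ (Φ^[j] x) i := hΦ i fun l hl => ih l (by rw [mem_Ioi, Fin.lt_def] at hl; omega)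
        _ = Φ^[j + 1] x i := by rw [iterate_succ_apply']
  refine funext fun i => ?_
  rw [← iterate_succ_apply' Φ n x]
  exact stable n i (by omega)

theorem mk_subtype_dependsOn_le_mk_arrow {ι : Type*} {β : ι → Type*} {α : Type*} [Nonempty α]
    (s : Set ι) : #{f : (∀ i, β i) → α // DependsOn f s} ≤ #((∀ i : s, β i) → α) := by
  refine mk_le_of_surjective (f := fun g => ⟨g ∘ s.domRestrict,
    fun _ _ h => congrArg g (s.dependsOn_domRestrict h)⟩) ?_
  rintro ⟨f, hf⟩
  obtain ⟨g, rfl⟩ := dependsOn_iff_exists_comp.1 hf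
  exact ⟨g, rfl⟩

namespace Sh883

def seqOfPrefix {β : Type*} (g : List β → β) : ℕ → β :=
  Nat.strongRec fun n s => g (List.ofFn fun i : Fin n => s i i.2)

theorem seqOfPrefix_eq {β : Type*} (g : List β → β) (n : ℕ) :
    seqOfPrefix g n = g (List.ofFn fun i : Fin n => seqOfPrefix g i) :=
  Nat.strongRec_eq _ n

abbrev Tuples {k : ℕ} (S : Fin (k + 1) → Type*) : Type _ := (l : Fin (k + 1)) → ℕ → S l

section Diagonal

variable {k : ℕ} {S : Fin (k + 1) → Type u}

theorem exists_forall_restrictAtD_eq {α : Type*} [∀ l, Nonempty (S l)] (d : ∀ m, S m → Tuples S → α)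
    (hd : ∀ m (f : Tuples S → α), DependsOn f (Iio m) → ∃ x, d m x = f) (H : ResD k S → α) :
    ∃ η : Tuples S, ∀ m n, H (restrictAtD η m n) = d m (η m n) η := by
  choose c hc using hd
  let below (m : Fin (k + 1)) (u : Tuples S) (L : List (S m)) : Tuples S → α :=
    fun ρ => H ⟨m, L, fun l _ => if l < m then ρ l else u l⟩
  have below_dependsOn : ∀ m u L, DependsOn (below m u L) (Iio m) := by
    intro m u L ρ ρ' h
    simp only [below]
    congr
    funext l _
    split_ifs with hlm
    exacts [h l hlm, rfl]
  -- One pass of `Φ` rebuilds every coordinate `m` from the coordinates of `u` above `m`: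
  -- its `n`-th entry codes `below m u` at the prefix built so far. A fixed point is the
  -- prediction, because `below m η L η = H ⟨m, L, η⟩`.
  let Φ : Tuples S → Tuples S := fun u m =>
    seqOfPrefix fun L => c m (below m u L) (below_dependsOn m u L)
  have hΦ : ∀ m, DependsOn (fun u => Φ u m) (Ioi m) := by
    intro m u u' h
    have : ∀ L, below m u L = below m u' L := fun L => funext fun ρ => by
      simp only [below]
      congr
      funext l hl
      split_ifs with hlm
      exacts [rfl, h l (lt_of_le_of_ne (not_lt.1 hlm) (Ne.symm hl))]
    simp only [Φ, this]
  obtain ⟨θ⟩ : Nonempty (Tuples S) := inferInstance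
  set η := Φ^[k + 1] θ
  refine ⟨η, fun m n => ?_⟩
  have hfix : η m = Φ η m := (congrFun (isFixedPt_iterate_of_dependsOn_Ioi Φ hΦ θ) m).symm
  have hη : ∀ i, η m i = c m (below m η (List.ofFn fun j : Fin i => η m j))
      (below_dependsOn ..) := by
    intro i
    rw [hfix]
    exact seqOfPrefix_eq _ i
  rw [hη n, hc]
  simp only [below, ite_self]
  rfl

theorem exists_blackBox_of_mk_dependsOn_le {α : Type u} [Nonempty α]
    (h : ∀ m, #{f : Tuples S → α // DependsOn f (Iio m)} ≤ #(S m)) :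
    ∃ d : ∀ m, S m → Tuples S → α, ∀ H : ResD k S → α,
      ∃ η : Tuples S, ∀ m n, H (restrictAtD η m n) = d m (η m n) η := by
  have hne : ∀ m, Nonempty {f : Tuples S → α // DependsOn f (Iio m)} := fun m =>
    ⟨⟨fun _ => Classical.arbitrary α, (dependsOn_const _).mono (empty_subset _)⟩⟩
  have code : ∀ m, {f : Tuples S → α // DependsOn f (Iio m)} ↪ S m :=
    fun m => Classical.choice ((le_def _ _).1 (h m))
  have : ∀ m, Nonempty (S m) := fun m => (hne m).map (code m)
  let d m x : Tuples S → α := (invFun (code m) x).1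
  refine ⟨d, exists_forall_restrictAtD_eq d fun m f hf => ⟨code m ⟨f, hf⟩, ?_⟩⟩
  simp only [d, leftInverse_invFun (code m).injective _]

end Diagonal

section Beth

variable {χ : Cardinal.{u}}

theorem aleph0_le_iterBeth (hχ : ℵ₀ ≤ χ) : ∀ n, ℵ₀ ≤ iterBeth χ n
  | 0 => hχ
  | n + 1 => (aleph0_le_iterBeth hχ n).trans (cantor _).le

theorem iterBeth_mono (χ : Cardinal.{u}) : Monotone (iterBeth χ) :=
  monotone_nat_of_le_succ fun _ => (cantor _).le

theorem iterBeth_power_aleph0 (hχinf : ℵ₀ ≤ χ) (hχ : χ ^ ℵ₀ = χ) :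
    ∀ n, iterBeth χ n ^ ℵ₀ = iterBeth χ n
  | 0 => hχ
  | n + 1 => by
    rw [iterBeth, ← power_mul, mul_eq_left (aleph0_le_iterBeth hχinf n)
      (aleph0_le_iterBeth hχinf n) aleph0_ne_zero]

theorem power_iterBeth_le_iterBeth_succ (hχ : ℵ₀ ≤ χ) (n : ℕ) :
    χ ^ iterBeth χ n ≤ iterBeth χ (n + 1) :=
  calc χ ^ iterBeth χ n ≤ (2 ^ χ) ^ iterBeth χ n := power_le_power_right (cantor χ).le
    _ = 2 ^ iterBeth χ n := by
      rw [← power_mul, mul_eq_right (a := χ) (aleph0_le_iterBeth hχ n) (iterBeth_mono χ n.zero_le)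
        (aleph0_pos.trans_le hχ).ne']

variable {k : ℕ} {S : Fin (k + 1) → Type u}

theorem mk_pi_Iio_le_iterBeth (hχinf : ℵ₀ ≤ χ) (hχ : χ ^ ℵ₀ = χ)
    (hS : ∀ l : Fin (k + 1), #(S l) = iterBeth χ l.1) {m : Fin (k + 1)} {n : ℕ}
    (hmn : m.1 = n + 1) : #(∀ l : Iio m, ℕ → S l) ≤ iterBeth χ n := by
  have hℶ : iterBeth χ n ≠ 0 := (aleph0_pos.trans_le (aleph0_le_iterBeth hχinf n)).ne'
  rw [mk_pi]
  calc prod (fun l : Iio m => #(ℕ → S l)) ≤ prod fun _ : Iio m => iterBeth χ n :=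
        prod_le_prod _ _ fun l => ?_
    _ = iterBeth χ n ^ lift.{u} #(Iio m) := by rw [prod_const, lift_uzero]
    _ ≤ iterBeth χ n ^ ℵ₀ := power_le_power_left hℶ (lift_le_aleph0.2 mk_le_aleph0)
    _ = iterBeth χ n := iterBeth_power_aleph0 hχinf hχ n
  have hl : l.1.1 ≤ n := by have := Fin.lt_def.1 l.2; omega
  rw [mk_arrow, mk_nat, lift_aleph0, lift_uzero, hS, iterBeth_power_aleph0 hχinf hχ]
  exact iterBeth_mono χ hl

theorem mk_dependsOn_Iio_le (hχinf : ℵ₀ ≤ χ) (hχ : χ ^ ℵ₀ = χ)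
    (hS : ∀ l : Fin (k + 1), #(S l) = iterBeth χ l.1) {α : Type u} [Nonempty α] (hα : #α = χ)
    (m : Fin (k + 1)) : #{f : Tuples S → α // DependsOn f (Iio m)} ≤ #(S m) := by
  refine (mk_subtype_dependsOn_le_mk_arrow _).trans ?_
  rw [← power_def, hα, hS]
  obtain ⟨_ | n, hm⟩ := m
  · have : IsEmpty (Iio (⟨0, hm⟩ : Fin (k + 1))) := ⟨fun l => Nat.not_lt_zero _ l.2⟩
    rw [mk_eq_one, power_one]
    rfl
  · exact (power_le_power_left (aleph0_pos.trans_le hχinf).ne'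
      (mk_pi_Iio_le_iterBeth hχinf hχ hS rfl)).trans (power_iterBeth_le_iterBeth_succ hχinf n)

end Beth

end Sh883

open Sh883 in
/-- Let `χ` be an infinite cardinal with `χ^{ℵ₀} = χ`, and for `ℓ ≤ k`
let `S_ℓ` be a set of cardinality `ℶ_ℓ(χ)`.  Then the full set
`Λ = ∏_{ℓ≤k} (ℕ → S_ℓ)` of `(k+1)`-tuples has a `(Λ, χ̄)`-black box with `χ_m = χ`
for every `m ≤ k`. -/
theorem stmt11 (k : ℕ) (χ : Cardinal.{u}) (hχinf : ℵ₀ ≤ χ) (hχ : χ ^ ℵ₀ = χ)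
    (S : Fin (k + 1) → Type u) (hS : ∀ l : Fin (k + 1), #(S l) = iterBeth χ l.1) :
    ∃ A : ↥(Set.univ : Set ((m : Fin (k + 1)) → ℕ → S m)) → Fin (k + 1) → ℕ → Ordinal.{u},
      IsBlackBoxD Set.univ (fun _ => χ) A := by
  -- ordinals below `χ` are modelled by `χ.ord.ToType`, which lives in the universe of the `S l`
  have : Nonempty χ.ord.ToType :=
    Ordinal.nonempty_toType_iff.2 (ord_eq_zero.not.2 (aleph0_pos.trans_le hχinf).ne')
  obtain ⟨d, hd⟩ := exists_blackBox_of_mk_dependsOn_le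
    (mk_dependsOn_Iio_le hχinf hχ hS (α := χ.ord.ToType) (by rw [mk_toType, card_ord]))
  refine ⟨fun η m n => d m (η.1 m n) η.1, fun η m n => (d m (η.1 m n) η.1).toOrd.2,
    fun h hh => ?_⟩
  obtain ⟨η, hη⟩ := hd fun ν => invFun (fun x : χ.ord.ToType => (x : Ordinal)) (h ν)
  refine ⟨⟨η, mem_univ η⟩, fun m n => ?_⟩
  show h (restrictAtD η m n) = (d m (η m n) η : Ordinal)
  rw [← hη m n]
  exact (invFun_eq (f := fun x : χ.ord.ToType => (x : Ordinal))
    ⟨Ordinal.ToType.mk ⟨_, hh m _ ⟨η, mem_univ η, n, rfl⟩⟩, by simp⟩).symm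
end

section
/- Let λ be an infinite cardinal and H a nonempty set of cardinality at most λ^{ℵ_0}. Then there exists a family ⟨h_{η,n} : η ∈ (ℕ → λ), n ∈ ℕ⟩ of elements of H such that: for every family ⟨f_ν : ν a finite sequence of ordinals less than λ⟩ of elements of H and every ordinal α < λ, there is a strictly increasing function η : ℕ → λ with η(0) = α and h_{η,n} = f_{η↾n} for every n ∈ ℕ (where η↾n = ⟨η(0), …, η(n−1)⟩). -/
/-!
Encode each `x ∈ H` as an `ω`-sequence `e x : ℕ → λ`, and fix `d : λ → λ` all of whose fibres are
unbounded (split `λ ≃ λ × λ` and keep the first coordinate). The guess is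
`h_{η,n} := e⁻¹ (m ↦ d (η (⟨n, m⟩ + 1)))`. Given `f` and `α`, build `η` upwards from `η 0 = α`:
at step `k + 1 = ⟨n, m⟩ + 1` the prefix `η↾n` is already known (as `n ≤ ⟨n, m⟩`), so choose
`η (k + 1) > η k` in the fibre of `d` over the `m`-th term of `e (f (η↾n))`.
-/

open Cardinal Set

theorem Nat.exists_seq_of_step_of_past {α : Type*} (a : α) (F : ℕ → (ℕ → α) → α)
    (hF : ∀ k u v, (∀ i ≤ k, u i = v i) → F k u = F k v) :
    ∃ η : ℕ → α, η 0 = a ∧ ∀ k, η (k + 1) = F k η := by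
  let step : (n : ℕ) → ((m : ℕ) → m < n → α) → α
    | 0, _ => a
    | k + 1, past => F k fun i => if hi : i < k + 1 then past i hi else a
  refine ⟨Nat.strongRec step, Nat.strongRec_eq step 0, fun k => ?_⟩
  exact (Nat.strongRec_eq step (k + 1)).trans
    (hF k _ _ fun i hi => by simp [Nat.lt_succ_of_le hi])

theorem Cardinal.exists_fibers_unbounded {α : Type*} [LinearOrder α] [WellFoundedLT α]
    (hord : (#α).ord = Ordinal.type (α := α) (· < ·)) (hα : ℵ₀ ≤ #α) :
    ∃ d : α → α, ∀ β t, ∃ γ, β < γ ∧ d γ = t := by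
  obtain ⟨pair⟩ : Nonempty (α × α ≃ α) := Cardinal.eq.mp (by simp [mul_eq_self hα])
  refine ⟨fun γ => (pair.symm γ).1, fun β t => ?_⟩
  by_contra! hbounded
  have hmaps : ∀ p, pair (t, p) ∈ Iic β := fun p =>
    not_lt.mp fun hlt => hbounded _ hlt (by simp)
  have hinj : Function.Injective fun p => (⟨pair (t, p), hmaps p⟩ : Iic β) := fun p q hpq => by
    simpa using pair.injective (congrArg Subtype.val hpq)
  exact (mk_le_of_injective hinj).not_gt (mk_Iic_lt β hord hα)

theorem exists_strictMono_code_at_pair {T : Type*} [Preorder T] {d : T → T}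
    (hd : ∀ β t, ∃ γ, β < γ ∧ d γ = t) (code : List T → ℕ → T) (a : T) :
    ∃ η : ℕ → T, StrictMono η ∧ η 0 = a ∧
      ∀ n m, d (η (Nat.pair n m + 1)) = code (List.ofFn fun i : Fin n => η i) m := by
  choose next hnext_gt hnext_fiber using hd
  obtain ⟨η, hη0, hηsucc⟩ := Nat.exists_seq_of_step_of_past a
    (fun k u => next (u k) (code (List.ofFn fun i : Fin k.unpair.1 => u i) k.unpair.2))
    fun k u v huv => by
      have hprefix : (fun i : Fin k.unpair.1 => u i) = fun i : Fin k.unpair.1 => v i :=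
        funext fun i => huv i (i.2.le.trans (Nat.unpair_left_le k))
      rw [huv k le_rfl, hprefix]
  refine ⟨η, strictMono_nat_of_lt_succ fun k => ?_, hη0, fun n m => ?_⟩
  · exact (hηsucc k).symm ▸ hnext_gt _ _
  · rw [hηsucc, hnext_fiber, Nat.unpair_pair]

/-- **the "silly black box".** Let `λ` be an infinite cardinal and `H` a
nonempty set of cardinality at most `λ^{ℵ₀}`.  There is a family
`⟨h_{η,n} : η ∈ (ℕ → λ), n ∈ ℕ⟩` of elements of `H` such that: for every family
`⟨f_ν : ν` a finite sequence of ordinals below `λ⟩` of elements of `H` and every ordinal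
`α < λ`, there is a strictly increasing `η : ℕ → λ` with `η(0) = α` and
`h_{η,n} = f_{η↾n}` for every `n`.  (Ordinals below `λ` are realized as `λ.ord.toType`.) -/
theorem stmt13 (lam : Cardinal.{u}) (hlam : ℵ₀ ≤ lam)
    (H : Type u) (hne : Nonempty H) (hH : #H ≤ lam ^ ℵ₀) :
    ∃ h : (ℕ → lam.ord.ToType) → ℕ → H,
      ∀ (f : List lam.ord.ToType → H) (α : lam.ord.ToType),
        ∃ η : ℕ → lam.ord.ToType, StrictMono η ∧ η 0 = α ∧
          ∀ n : ℕ, h η n = f (List.ofFn fun i : Fin n => η i) := by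
  obtain ⟨enc⟩ : Nonempty (H ↪ (ℕ → lam.ord.ToType)) := by
    rw [← le_def, mk_arrow, mk_ord_toType]
    simpa using hH
  obtain ⟨d, hd⟩ := exists_fibers_unbounded (α := lam.ord.ToType) (by simp) (by simpa using hlam)
  refine ⟨fun η n => Function.invFun enc fun m => d (η (Nat.pair n m + 1)), fun f α => ?_⟩
  obtain ⟨η, hmono, hη0, hcode⟩ := exists_strictMono_code_at_pair hd (fun l => enc (f l)) α
  refine ⟨η, hmono, hη0, fun n => ?_⟩
  simp only [hcode]
  exact Function.leftInverse_invFun enc.injective _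
end
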